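/- For every type t ∈ T ∪ {∞} and every m ∈ ℕ₊, there exists a finite function s ∈ S_t such that U_t ⊆ O_s ⊆ U_t ∪ U_{(m,0)}, where U_t = {K compact metrizable : t(K) ≥ t}. -/

import Mathlib

open Topology TopologicalSpace Set

/-- The hyperspace of compact subsets (including `∅`) of `X`. -/
def Kt (X : Type*) [TopologicalSpace X] : Type _ := {A : Set X // IsCompact A}

/-- The Vietoris topology on the hyperspace, generated by the sets
`U⁺ = {A : A ⊆ U}` and `U⁻ = {A : A ∩ U ≠ ∅}` for `U` open. -/
instance Kt.topology (X : Type*) [TopologicalSpace X] : TopologicalSpace (Kt X) :=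
  TopologicalSpace.generateFrom
    ({S | ∃ U : Set X, IsOpen U ∧ S = {A : Kt X | A.1 ⊆ U}} ∪
     {S | ∃ U : Set X, IsOpen U ∧ S = {A : Kt X | (A.1 ∩ U).Nonempty}})

/-- The Hilbert cube `[0,1]^ω`. -/
abbrev HilbertCube : Type := ℕ → unitInterval

open scoped Classical in
/-- The type of a space: the pair (number of connected components, number of
nondegenerate components) if the number of components is finite; `none` (= `∞`) otherwise. -/
noncomputable def typeOf (K : Type*) [TopologicalSpace K] : Option (ℕ × ℕ) :=
  if Finite (ConnectedComponents K) then
    some (Nat.card (ConnectedComponents K),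
      Nat.card {c : ConnectedComponents K |
        ¬ ({x : K | ConnectedComponents.mk x = c} : Set K).Subsingleton})
  else none

/-- The order on the type poset `T ∪ {∞}` (`none` plays the role of `∞`):
`(0,0)` is comparable only with itself, positive finite types are ordered by the
product order, and `∞` is above every positive finite type. -/
def tle : Option (ℕ × ℕ) → Option (ℕ × ℕ) → Prop
  | none, none => True
  | none, some _ => False
  | some p, none => 0 < p.1
  | some p, some q => (p = (0, 0) ∧ q = (0, 0)) ∨ (0 < p.1 ∧ p.1 ≤ q.1 ∧ p.2 ≤ q.2)

/-- Membership in the type poset `T ∪ {∞}`: finite types are pairs `(m, n)` with `m ≥ n`. -/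
def isType : Option (ℕ × ℕ) → Prop
  | none => True
  | some p => p.2 ≤ p.1

/-- `K` admits a decomposition into pairwise disjoint clopen sets indexed by `I`
with the `i`-th piece of cardinality at least `s i`. -/
def HasDecomp (K : Type*) [TopologicalSpace K] {I : Type*} (s : I → ℕ) : Prop :=
  ∃ P : I → Set K, (∀ i, IsClopen (P i)) ∧ Pairwise (Function.onFun Disjoint P) ∧
    (⋃ i, P i) = Set.univ ∧ ∀ i, (s i : ℕ∞) ≤ (P i).encard

/-- `s ∈ S_t`: for `t = (m', n')` the domain has size `m'` and at most `n'` values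
exceed `1`; for `t = ∞` the domain is merely nonempty. -/
def Sfit : Option (ℕ × ℕ) → (M : ℕ) → (Fin M → ℕ) → Prop
  | none, M, _ => 0 < M
  | some p, M, s => M = p.1 ∧ Nat.card {i : Fin M // 1 < s i} ≤ p.2

universe u


/-!
The components of a compact metrizable `K` form a compact totally disconnected space, in which
finitely many disjoint finite sets of components are separated by a clopen partition; pulled back
to `K`, this produces the decompositions. For `t = (m', n')` take `s = m` on `n'` indices and
`s = 1` on the other `m' - n'`. If `t(K) ≥ t`, each of the first `n'` pieces can be given a
nondegenerate, hence infinite, component (or `s i` components, when there are infinitely many).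
Conversely, the pieces of a decomposition are unions of components, so there are at least `m'`
components, and either each of the first `n'` pieces meets a nondegenerate component, so that
`t(K) ≥ t`, or one of them is made of at least `m` degenerate components, so that
`t(K) ≥ (m, 0)`. For `t = ∞` the same argument works with `s ≡ 1` on `m` indices.
-/

open ConnectedComponents Function

def nondegenerateComponents (K : Type*) [TopologicalSpace K] : Set (ConnectedComponents K) :=
  {c | ¬ ({x : K | ConnectedComponents.mk x = c} : Set K).Subsingleton}

section TypeOf

variable {K : Type*} [TopologicalSpace K]

lemma typeOf_of_finite [Finite (ConnectedComponents K)] :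
    typeOf K = some (Nat.card (ConnectedComponents K), Nat.card (nondegenerateComponents K)) :=
  if_pos ‹_›

lemma typeOf_of_infinite [Infinite (ConnectedComponents K)] : typeOf K = none :=
  if_neg (not_finite_iff_infinite.2 ‹_›)

lemma tle_none_typeOf_iff : tle none (typeOf K) ↔ Infinite (ConnectedComponents K) := by
  rcases finite_or_infinite (ConnectedComponents K) with h | h
  · simp [typeOf_of_finite, tle, not_infinite_iff_finite.2 h]
  · simp [typeOf_of_infinite, tle, h]

lemma tle_some_typeOf_iff {a b : ℕ} (ha : 0 < a) :
    tle (some (a, b)) (typeOf K) ↔ (Finite (ConnectedComponents K) →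
      a ≤ Nat.card (ConnectedComponents K) ∧ b ≤ Nat.card (nondegenerateComponents K)) := by
  rcases finite_or_infinite (ConnectedComponents K) with h | h
  · simp [typeOf_of_finite, tle, h, ha, ha.ne']
  · simp [typeOf_of_infinite, tle, not_finite_iff_infinite.2 h, ha]

lemma tle_zero_typeOf_iff : tle (some (0, 0)) (typeOf K) ↔ IsEmpty K := by
  rw [← isEmpty_iff_isEmpty]
  rcases finite_or_infinite (ConnectedComponents K) with h | h
  · simp only [typeOf_of_finite, tle, lt_irrefl, false_and, or_false, true_and, Prod.mk.injEq,
      Finite.card_eq_zero_iff]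
    exact ⟨And.left, fun hK => ⟨hK, inferInstance⟩⟩
  · simp [typeOf_of_infinite, tle, not_isEmpty_of_nonempty]

end TypeOf

section Decomposition

variable {K : Type*} [TopologicalSpace K] {ι : Type*}

lemma hasDecomp_iff_isEmpty [IsEmpty ι] (s : ι → ℕ) : HasDecomp K s ↔ IsEmpty K := by
  simp only [HasDecomp, iUnion_of_empty, IsEmpty.forall_iff, and_true, true_and]
  refine ⟨fun ⟨_, _, h⟩ => univ_eq_empty_iff.1 h.symm, fun _ => ?_⟩
  exact ⟨fun _ => ∅, Subsingleton.pairwise, (univ_eq_empty_iff.2 ‹_›).symm⟩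

lemma encard_le_encard_preimage_mk (Z : Set (ConnectedComponents K)) :
    Z.encard ≤ (ConnectedComponents.mk ⁻¹' Z).encard := by
  simpa only [image_preimage_eq Z surjective_coe] using
    encard_image_le ConnectedComponents.mk (ConnectedComponents.mk ⁻¹' Z)

lemma encard_preimage_mk_eq_top [T1Space K] {c : ConnectedComponents K}
    (hc : c ∈ nondegenerateComponents K) : (ConnectedComponents.mk ⁻¹' {c}).encard = ⊤ := by
  obtain ⟨x, rfl⟩ := surjective_coe c
  have hx : ConnectedComponents.mk ⁻¹' {ConnectedComponents.mk x} = connectedComponent x :=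
    connectedComponents_preimage_singleton
  rw [hx, Infinite.encard_eq]
  refine isPreconnected_connectedComponent.infinite_of_nontrivial ?_
  rw [← hx, ← not_subsingleton_iff]
  exact hc

variable [CompactSpace K] [T2Space K] [Finite ι] [Nonempty ι]

lemma hasDecomp_of_pairwise_disjoint {s : ι → ℕ} {Z : ι → Set (ConnectedComponents K)}
    (hZ : ∀ i, (Z i).Finite) (hdisj : Pairwise (Disjoint on Z))
    (hs : ∀ i, (s i : ℕ∞) ≤ (ConnectedComponents.mk ⁻¹' Z i).encard) :
    HasDecomp K s := by
  obtain ⟨C, hC, hZC, -, hcover, hCdisj⟩ := exists_clopen_partition_of_clopen_cover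
    (fun i => (hZ i).isClosed) (fun _ => isClopen_univ) (fun _ => subset_univ _)
    (fun i _ j _ hij => hdisj hij)
  refine ⟨fun i => ConnectedComponents.mk ⁻¹' C i, fun i => (hC i).preimage continuous_coe,
    fun i j hij => (hCdisj (mem_univ i) (mem_univ j) hij).preimage _, ?_,
    fun i => (hs i).trans (encard_le_encard (preimage_mono (hZC i)))⟩
  rw [iUnion_const, univ_subset_iff] at hcover
  rw [← preimage_iUnion, hcover, preimage_univ]

lemma hasDecomp_of_injective {s : ι → ℕ} {c : ι → ConnectedComponents K} (hc : Injective c)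
    (hs : ∀ i, (s i : ℕ∞) ≤ (ConnectedComponents.mk ⁻¹' {c i}).encard) : HasDecomp K s :=
  hasDecomp_of_pairwise_disjoint (fun i => finite_singleton (c i))
    (fun _ _ hij => disjoint_singleton.2 (hc.ne hij)) hs

lemma hasDecomp_of_infinite [Infinite (ConnectedComponents K)] (s : ι → ℕ) :
    HasDecomp K s := by
  obtain ⟨e, he⟩ := Countable.exists_injective_nat (ι × ℕ)
  set c : ι × ℕ → ConnectedComponents K := Infinite.natEmbedding _ ∘ e
  have hc : Injective c := (Infinite.natEmbedding _).injective.comp he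
  have hci (i : ι) : Injective fun j : Fin (s i) => c (i, j) :=
    fun j j' h => Fin.ext (Prod.mk_right_injective i (hc h))
  refine hasDecomp_of_pairwise_disjoint (Z := fun i => range fun j : Fin (s i) => c (i, j))
    (fun i => finite_range _) ?_ fun i => ?_
  · refine fun i i' hii' => disjoint_left.2 ?_
    rintro _ ⟨j, rfl⟩ ⟨j', hj⟩
    exact hii' (congrArg Prod.fst (hc hj)).symm
  · calc (s i : ℕ∞) = ENat.card (Fin (s i)) := by simp
      _ ≤ _ := (hci i).encard_range
      _ ≤ _ := encard_le_encard_preimage_mk _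

end Decomposition

section Counting

variable {K : Type*} [TopologicalSpace K] {ι : Type*}

lemma mk_mem_nondegenerateComponents_iff {x : K} :
    ConnectedComponents.mk x ∈ nondegenerateComponents K ↔
      (connectedComponent x).Nontrivial := by
  rw [← not_subsingleton_iff, ← connectedComponents_preimage_singleton]
  rfl

lemma injective_mk_comp_of_mem {P : ι → Set K} (hP : ∀ i, IsClopen (P i))
    (hdisj : Pairwise (Disjoint on P)) {x : ι → K} (hx : ∀ i, x i ∈ P i) :
    Injective (ConnectedComponents.mk ∘ x) := by
  intro i j hij
  by_contra hne
  have hxj : x j ∈ connectedComponent (x i) := coe_eq_coe'.1 hij.symm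
  exact disjoint_left.1 (hdisj hne) ((hP i).connectedComponent_subset (hx i) hxj) (hx j)

lemma card_le_card_of_hasDecomp [Finite (ConnectedComponents K)] {s : ι → ℕ}
    (h : HasDecomp K s) (hs : ∀ i, 0 < s i) :
    Nat.card ι ≤ Nat.card (ConnectedComponents K) := by
  obtain ⟨P, hP, hdisj, -, hcard⟩ := h
  have hne (i : ι) : (P i).Nonempty :=
    one_le_encard_iff_nonempty.1 ((Nat.one_le_cast.2 (hs i)).trans (hcard i))
  choose x hx using hne
  exact Nat.card_le_card_of_injective _ (injective_mk_comp_of_mem hP hdisj hx)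

lemma injOn_mk_of_subsingleton {A : Set K} (hA : ∀ x ∈ A, (connectedComponent x).Subsingleton) :
    InjOn ConnectedComponents.mk A := fun x hx _ _ hxy =>
  hA x hx mem_connectedComponent (coe_eq_coe'.1 hxy.symm)

lemma le_card_or_le_card_of_hasDecomp_append [Finite (ConnectedComponents K)] {n k N : ℕ}
    (h : HasDecomp K (Fin.append (fun _ : Fin n => N) (fun _ : Fin k => 1))) :
    n ≤ Nat.card (nondegenerateComponents K) ∨ N ≤ Nat.card (ConnectedComponents K) := by
  obtain ⟨P, hP, hdisj, -, hcard⟩ := h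
  by_cases hnd : ∀ j : Fin n, ∃ x ∈ P (Fin.castAdd k j), (connectedComponent x).Nontrivial
  · choose x hxP hx using hnd
    have hinj := injective_mk_comp_of_mem (fun j => hP _)
      (hdisj.comp_of_injective (Fin.castAdd_injective n k)) hxP
    left
    simpa using Nat.card_le_card_of_injective
      (fun j => (⟨_, mk_mem_nondegenerateComponents_iff.2 (hx j)⟩ : nondegenerateComponents K))
      fun j j' hjj' => hinj (congrArg Subtype.val hjj')
  · push Not at hnd
    obtain ⟨j, hj⟩ := hnd
    right
    have hN := Fin.append_left (fun _ : Fin n => N) (fun _ : Fin k => 1) j ▸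
      hcard (Fin.castAdd k j)
    rw [← (injOn_mk_of_subsingleton hj).encard_image] at hN
    exact_mod_cast hN.trans (encard_le_card.trans_eq (ENat.card_eq_coe_natCard _))

lemma exists_injective_castAdd_mem {α : Type*} [Finite α] {S : Set α} {n k : ℕ}
    (hn : n ≤ Nat.card S) (hnk : n + k ≤ Nat.card α) :
    ∃ c : Fin (n + k) → α, Injective c ∧ ∀ j, c (Fin.castAdd k j) ∈ S := by
  classical
  have := Fintype.ofFinite α
  obtain ⟨f⟩ : Nonempty (Fin n ↪ S) :=
    Function.Embedding.nonempty_of_card_le (by simpa [Nat.card_eq_fintype_card] using hn)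
  have hf : Injective (Subtype.val ∘ f) := Subtype.val_injective.comp f.injective
  have hk : k ≤ Nat.card ↥(range (Subtype.val ∘ f))ᶜ := by
    rw [Nat.card_coe_set_eq, ncard_compl, ncard_range_of_injective hf, Nat.card_fin]
    omega
  obtain ⟨g⟩ : Nonempty (Fin k ↪ ↥(range (Subtype.val ∘ f))ᶜ) :=
    Function.Embedding.nonempty_of_card_le (by simpa [Nat.card_eq_fintype_card] using hk)
  refine ⟨Fin.append (Subtype.val ∘ f) (Subtype.val ∘ g), Fin.append_injective_iff.2
    ⟨hf, Subtype.val_injective.comp g.injective, fun i j hij => (g j).2 ⟨i, hij⟩⟩,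
    fun j => by simp⟩

end Counting
section Weights

variable {K : Type*} [TopologicalSpace K] {n k N : ℕ}

lemma append_const_pos (hN : 0 < N) (i : Fin (n + k)) :
    0 < Fin.append (fun _ : Fin n => N) (fun _ : Fin k => 1) i := by
  induction i using Fin.addCases <;> simp [hN]

lemma card_one_lt_append_const_le :
    Nat.card {i // 1 < Fin.append (fun _ : Fin n => N) (fun _ : Fin k => 1) i} ≤ n := by
  have hsub : {i | 1 < Fin.append (fun _ : Fin n => N) (fun _ : Fin k => 1) i} ⊆
      range (Fin.castAdd k) := by
    intro i hi
    induction i using Fin.addCases with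
    | left j => exact mem_range_self j
    | right j => simp at hi
  calc _ ≤ Nat.card (range (Fin.castAdd k : Fin n → Fin (n + k))) :=
        Nat.card_mono (toFinite _) hsub
    _ = n := by rw [Nat.card_range_of_injective (Fin.castAdd_injective n k), Nat.card_fin]

lemma hasDecomp_append_of_tle [CompactSpace K] [T2Space K] (N : ℕ) (hpos : 0 < n + k)
    (h : tle (some (n + k, n)) (typeOf K)) :
    HasDecomp K (Fin.append (fun _ : Fin n => N) (fun _ : Fin k => 1)) := by
  have : Nonempty (Fin (n + k)) := Fin.pos_iff_nonempty.1 hpos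
  rcases finite_or_infinite (ConnectedComponents K) with hfin | hinf
  · obtain ⟨hnk, hn⟩ := (tle_some_typeOf_iff hpos).1 h hfin
    obtain ⟨c, hc, hcS⟩ := exists_injective_castAdd_mem hn hnk
    refine hasDecomp_of_injective hc fun i => ?_
    induction i using Fin.addCases with
    | left j => simp [encard_preimage_mk_eq_top (hcS j)]
    | right j => simpa using encard_le_encard_preimage_mk {c (Fin.natAdd n j)}
  · exact hasDecomp_of_infinite _

lemma tle_or_tle_of_hasDecomp_append (hpos : 0 < n + k) (hN : 0 < N)
    (h : HasDecomp K (Fin.append (fun _ : Fin n => N) (fun _ : Fin k => 1))) :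
    tle (some (n + k, n)) (typeOf K) ∨ tle (some (N, 0)) (typeOf K) := by
  rw [tle_some_typeOf_iff hpos, tle_some_typeOf_iff hN]
  rcases finite_or_infinite (ConnectedComponents K) with hfin | hinf
  · have hcard := card_le_card_of_hasDecomp h (append_const_pos hN)
    rcases le_card_or_le_card_of_hasDecomp_append h with hn | hN'
    · exact Or.inl fun _ => ⟨by simpa using hcard, hn⟩
    · exact Or.inr fun _ => ⟨hN', Nat.zero_le _⟩
  · exact Or.inl fun _ => (not_finite (ConnectedComponents K)).elim

end Weights

theorem stmt17 (o : Option (ℕ × ℕ)) (ho : isType o) (m : ℕ) (hm : 0 < m) :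
    ∃ (M : ℕ) (s : Fin M → ℕ), (∀ i, 0 < s i) ∧ Sfit o M s ∧
      ∀ (K : Type u) [TopologicalSpace K] [CompactSpace K] [MetrizableSpace K],
        (tle o (typeOf K) → HasDecomp K s) ∧
        (HasDecomp K s → tle o (typeOf K) ∨ tle (some (m, 0)) (typeOf K)) := by
  obtain _ | ⟨m', n'⟩ := o
  · have : Nonempty (Fin m) := Fin.pos_iff_nonempty.1 hm
    refine ⟨m, fun _ => 1, fun _ => one_pos, hm, fun K _ _ _ => ⟨fun h => ?_, fun h => ?_⟩⟩
    · have := tle_none_typeOf_iff.1 h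
      exact hasDecomp_of_infinite _
    · refine Or.inr ((tle_some_typeOf_iff hm).2 fun _ => ⟨?_, Nat.zero_le _⟩)
      simpa using card_le_card_of_hasDecomp h fun _ => one_pos
  have hnm : n' ≤ m' := ho
  obtain ⟨k, rfl⟩ := Nat.exists_eq_add_of_le hnm
  rcases (n' + k).eq_zero_or_pos with h0 | hpos
  · obtain ⟨rfl, rfl⟩ : n' = 0 ∧ k = 0 := by omega
    refine ⟨0, fun _ => 1, fun _ => one_pos, ⟨rfl, by simp⟩, fun K _ _ _ => ?_⟩
    simp only [Nat.add_zero, tle_zero_typeOf_iff, hasDecomp_iff_isEmpty]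
    exact ⟨id, Or.inl⟩
  exact ⟨n' + k, _, append_const_pos hm, ⟨rfl, card_one_lt_append_const_le⟩, fun K _ _ _ =>
    ⟨hasDecomp_append_of_tle m hpos, tle_or_tle_of_hasDecomp_append hpos hm⟩⟩
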